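/- Let W be a finite Coxeter group with long element w∘, let 𝓛 be a nonempty convex subset of W, and let i_N⋯i_1 be a reduced word for w∘. Then τ_{i_N}⋯τ_{i_1}(W) = 𝓛; that is, applying the noninvertible Bender–Knuth toggles along any reduced word for the long element sends every element of W into 𝓛, and every element of 𝓛 is attained. -/

import Mathlib

open scoped Classical

noncomputable section

namespace BKBilliards

variable {I : Type*} [Fintype I] [DecidableEq I]
variable {M : CoxeterMatrix I} {W : Type*} [Group W]

/-- The simple root indexed by `i`, i.e. the `i`-th standard basis vector of `ℝ^I`. -/
def sroot (i : I) : I → ℝ := Pi.single i 1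

/-- The data `(ρ, B)` constitutes the standard geometric representation of the Coxeter
system `cs`, together with its induced symmetric bilinear form (with `μ = 1` on all
pairs whose Coxeter matrix entry is `∞`, encoded as `0`). -/
structure IsGeometric (cs : CoxeterSystem M W) (ρ : Representation ℝ W (I → ℝ))
    (B : LinearMap.BilinForm ℝ (I → ℝ)) : Prop where
  /-- `B(αᵢ, αᵢ') = -cos (π / m i i')` when `m i i' ≠ ∞`. -/
  form_apply_of_ne_zero : ∀ i i' : I, M i i' ≠ 0 →
    B (sroot i) (sroot i') = - Real.cos (Real.pi / (M i i' : ℝ))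
  /-- `B(αᵢ, αᵢ') = -1` when `m i i' = ∞` (encoded as `0`). -/
  form_apply_of_eq_zero : ∀ i i' : I, M i i' = 0 → B (sroot i) (sroot i') = -1
  /-- Each simple reflection acts by the reflection formula. -/
  simple_apply : ∀ (i : I) (v : I → ℝ), ρ (cs.simple i) v = v - (2 * B v (sroot i)) • sroot i

variable (ρ : Representation ℝ W (I → ℝ))

/-- The root system `Φ = {w αᵢ : w ∈ W, i ∈ I}`. -/
def Phi : Set (I → ℝ) := {v | ∃ (w : W) (i : I), v = ρ w (sroot i)}

/-- The half-space `H_β⁺ = {w ∈ W : w β ∈ Φ⁺}`: for a root `β`, membership amounts to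
`w β` being a nonnegative combination of the simple roots. -/
def Hplus (β : I → ℝ) : Set W := {w : W | 0 ≤ ρ w β}

/-- `R(𝓛) = {β ∈ Φ : 𝓛 ⊆ H_β⁺}`. -/
def RL (L : Set W) : Set (I → ℝ) := {β | β ∈ Phi ρ ∧ ∀ w ∈ L, w ∈ Hplus ρ β}

/-- `𝓛` is convex if it equals the intersection of all half-spaces containing it. -/
def IsConvex (L : Set W) : Prop := ∀ u : W, (∀ β ∈ RL ρ L, u ∈ Hplus ρ β) → u ∈ L

/-- The set of separators of `u`: `Sep(u) = {β ∈ R(𝓛) : u β ∈ Φ⁻}`. -/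
def Sep (L : Set W) (u : W) : Set (I → ℝ) := {β | β ∈ RL ρ L ∧ ρ u β ≤ 0}

variable (cs : CoxeterSystem M W)

/-- The noninvertible Bender–Knuth toggle `τᵢ` associated to the convex set `𝓛`. -/
def toggle (L : Set W) (i : I) (u : W) : W :=
  if ρ u⁻¹ (sroot i) ∈ RL ρ L then u else cs.simple i * u

/-- For a word `𝗐 = i_M ⋯ i_1` (a list whose head is `i_M`), the composition
`τ_𝗐 = τ_{i_M} ⋯ τ_{i_1}`. -/
def toggleWord (L : Set W) (l : List I) (u : W) : W :=
  l.foldr (fun i v => toggle ρ cs L i v) u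

/-- `β` dominates `β'` if `H_β⁺ ⊇ H_{β'}⁺`. -/
def Dominates (β β' : I → ℝ) : Prop := Hplus ρ β' ⊆ Hplus ρ β

/-- A small root: a positive root dominating no positive root other than itself. -/
def IsSmall (β : I → ℝ) : Prop :=
  β ∈ Phi ρ ∧ 0 ≤ β ∧ ∀ β', β' ∈ Phi ρ → 0 ≤ β' → Dominates ρ β β' → β' = β

/-- `β` is a transmitting root of the stratum `Str(R)`:
`β ∈ R(𝓛)` and `β = -w⁻¹ αᵢ` for some `w` with `Sep(w) = R` and some `i ∈ I`. -/
def IsTransmitting (L : Set W) (R : Set (I → ℝ)) (β : I → ℝ) : Prop :=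
  β ∈ RL ρ L ∧ ∃ (w : W) (i : I), Sep ρ L w = R ∧ β = - ρ w⁻¹ (sroot i)

-- ### auxiliary lemmas
section Aux

variable {cs : CoxeterSystem M W} {B : LinearMap.BilinForm ℝ (I → ℝ)}
variable {ρ}

lemma rho_inv_apply (w : W) (v : I → ℝ) : ρ w⁻¹ (ρ w v) = v := by
  rw [← Module.End.mul_apply, ← map_mul, inv_mul_cancel, map_one, Module.End.one_apply]

lemma rho_apply_inv (w : W) (v : I → ℝ) : ρ w (ρ w⁻¹ v) = v := by
  rw [← Module.End.mul_apply, ← map_mul, mul_inv_cancel, map_one, Module.End.one_apply]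

lemma decomp (v : I → ℝ) : v = ∑ i : I, v i • sroot i := by
  nth_rw 1 [pi_eq_sum_univ v]
  refine Finset.sum_congr rfl fun i _ => ?_
  congr 1
  funext j
  simp [sroot, Pi.single_apply, eq_comm]

variable (hgeom : IsGeometric cs ρ B)
include hgeom

lemma form_self (i : I) : B (sroot i) (sroot i) = 1 := by
  have h := hgeom.form_apply_of_ne_zero i i (by simp [M.diagonal i])
  rw [M.diagonal i] at h
  norm_num [Real.cos_pi] at h
  exact h

lemma form_single_symm (i j : I) : B (sroot i) (sroot j) = B (sroot j) (sroot i) := by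
  rcases eq_or_ne (M i j) 0 with h | h
  · rw [hgeom.form_apply_of_eq_zero i j h, hgeom.form_apply_of_eq_zero j i (by rwa [M.symmetric j i])]
  · rw [hgeom.form_apply_of_ne_zero i j h, hgeom.form_apply_of_ne_zero j i (by rwa [M.symmetric j i]),
      M.symmetric j i]

lemma form_expand (v w : I → ℝ) :
    B v w = ∑ i : I, ∑ j : I, v i * w j * B (sroot i) (sroot j) := by
  calc B v w = B (∑ i : I, v i • sroot i) (∑ j : I, w j • sroot j) := by
        rw [← decomp, ← decomp]
    _ = ∑ i : I, ∑ j : I, v i * w j * B (sroot i) (sroot j) := by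
        rw [map_sum, Finset.sum_comm]
        refine Finset.sum_congr rfl fun j _ => ?_
        rw [(B _).map_smul, map_sum, LinearMap.sum_apply, Finset.smul_sum]
        refine Finset.sum_congr rfl fun i _ => ?_
        rw [map_smul, LinearMap.smul_apply]
        simp only [smul_eq_mul]
        ring

lemma form_symm (v w : I → ℝ) : B v w = B w v := by
  rw [form_expand hgeom, form_expand hgeom, Finset.sum_comm]
  refine Finset.sum_congr rfl fun i _ => Finset.sum_congr rfl fun j _ => ?_
  rw [form_single_symm hgeom j i]
  ring

lemma simple_apply' (i : I) (v : I → ℝ) :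
    ρ (cs.simple i) v = v - (2 * B v (sroot i)) • sroot i := hgeom.simple_apply i v

lemma simple_apply_self (i : I) : ρ (cs.simple i) (sroot i) = - sroot i := by
  rw [hgeom.simple_apply i, form_self hgeom]
  funext j; simp; ring

lemma form_invariant_simple (i : I) (v w : I → ℝ) :
    B (ρ (cs.simple i) v) (ρ (cs.simple i) w) = B v w := by
  rw [hgeom.simple_apply i v, hgeom.simple_apply i w]
  simp only [map_sub, map_smul, LinearMap.sub_apply, LinearMap.smul_apply, smul_eq_mul]
  rw [form_self hgeom, form_symm hgeom (sroot i) w]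
  ring

lemma form_invariant (w : W) (v v' : I → ℝ) : B (ρ w v) (ρ w v') = B v v' := by
  obtain ⟨ω, -, rfl⟩ := cs.exists_reduced_word' w
  induction ω with
  | nil => simp
  | cons a ω ih =>
      rw [cs.wordProd_cons, map_mul]
      simp only [Module.End.mul_apply]
      rw [form_invariant_simple hgeom, ih]

lemma root_norm {β : I → ℝ} (hβ : β ∈ Phi ρ) : B β β = 1 := by
  obtain ⟨w, i, rfl⟩ := hβ
  rw [form_invariant hgeom, form_self hgeom]

lemma root_ne_zero {β : I → ℝ} (hβ : β ∈ Phi ρ) : β ≠ 0 := by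
  intro h
  have := root_norm hgeom hβ
  rw [h] at this
  simp at this

lemma root_smul_mem {β : I → ℝ} (hβ : β ∈ Phi ρ) (w : W) : ρ w β ∈ Phi ρ := by
  obtain ⟨u, i, rfl⟩ := hβ
  exact ⟨w * u, i, by rw [map_mul]; rfl⟩

lemma root_neg_mem {β : I → ℝ} (hβ : β ∈ Phi ρ) : -β ∈ Phi ρ := by
  obtain ⟨u, i, rfl⟩ := hβ
  refine ⟨u * cs.simple i, i, ?_⟩
  rw [map_mul, Module.End.mul_apply, simple_apply_self hgeom, map_neg]

lemma simple_mem_Phi (i : I) : sroot i ∈ Phi ρ := ⟨1, i, by simp⟩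

end Aux

section Tits

open CoxeterSystem

variable {cs : CoxeterSystem M W} {B : LinearMap.BilinForm ℝ (I → ℝ)}
variable {ρ}
variable (hgeom : IsGeometric cs ρ B)

lemma sroot_nonneg (i : I) : (0 : I → ℝ) ≤ sroot i := by
  intro j
  by_cases h : j = i <;> simp [sroot, Pi.single_apply, h]

include hgeom

lemma reflect_combo (t i j : I) (a b : ℝ) :
    ρ (cs.simple t) (a • sroot i + b • sroot j) = a • sroot i + b • sroot j
      - (2 * (a * B (sroot i) (sroot t) + b * B (sroot j) (sroot t))) • sroot t := by
  rw [simple_apply' hgeom]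
  congr 2
  rw [map_add, LinearMap.add_apply, map_smul, LinearMap.smul_apply, map_smul,
    LinearMap.smul_apply, smul_eq_mul, smul_eq_mul]

lemma dihedral_formula_fin (i j : I) (hij : i ≠ j) (hm : M i j ≠ 0) (n : ℕ) :
    ρ (cs.wordProd (alternatingWord i j n)) (sroot i) =
      if Even n then
        (Real.sin (((n:ℝ)+1) * (Real.pi / (M i j : ℝ))) / Real.sin (Real.pi / (M i j : ℝ))) • sroot i
          + (Real.sin ((n:ℝ) * (Real.pi / (M i j : ℝ))) / Real.sin (Real.pi / (M i j : ℝ))) • sroot j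
      else
        (Real.sin ((n:ℝ) * (Real.pi / (M i j : ℝ))) / Real.sin (Real.pi / (M i j : ℝ))) • sroot i
          + (Real.sin (((n:ℝ)+1) * (Real.pi / (M i j : ℝ))) / Real.sin (Real.pi / (M i j : ℝ))) • sroot j := by
  have hm2 : 2 ≤ M i j := by
    have h1 := M.off_diagonal i j hij
    omega
  set θ : ℝ := Real.pi / (M i j : ℝ) with hθ
  have hmpos : (0:ℝ) < (M i j : ℝ) := by exact_mod_cast Nat.pos_of_ne_zero hm
  have hθpos : 0 < θ := div_pos Real.pi_pos hmpos
  have hθlt : θ < Real.pi := by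
    rw [hθ, div_lt_iff₀ hmpos]
    nth_rw 1 [← mul_one Real.pi]
    apply mul_lt_mul_of_pos_left _ Real.pi_pos
    exact_mod_cast hm2
  have hsθ : Real.sin θ ≠ 0 := ne_of_gt (Real.sin_pos_of_pos_of_lt_pi hθpos hθlt)
  have hBij : B (sroot i) (sroot j) = - Real.cos θ := hgeom.form_apply_of_ne_zero i j hm
  have hBji : B (sroot j) (sroot i) = - Real.cos θ := by
    rw [hgeom.form_apply_of_ne_zero j i (by rwa [M.symmetric j i]), M.symmetric j i]
  have hBii : B (sroot i) (sroot i) = 1 := form_self hgeom i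
  have hBjj : B (sroot j) (sroot j) = 1 := form_self hgeom j
  induction n with
  | zero =>
      simp only [Nat.cast_zero, Even.zero, if_true]
      show ρ (cs.wordProd []) (sroot i) = _
      rw [cs.wordProd_nil, map_one]
      rw [zero_add, one_mul, zero_mul, Real.sin_zero, div_self hsθ, zero_div]
      simp
  | succ n ihn =>
      have hkey : Real.sin (((n:ℝ)+1+1)*θ)
          = 2*Real.cos θ*Real.sin (((n:ℝ)+1)*θ) - Real.sin ((n:ℝ)*θ) := by
        have e1 : ((n:ℝ)+1+1)*θ = ((n:ℝ)+1)*θ + θ := by ring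
        have e2 : (n:ℝ)*θ = ((n:ℝ)+1)*θ - θ := by ring
        rw [e1, e2, Real.sin_add, Real.sin_sub]
        ring
      rcases Nat.even_or_odd n with hev | hodd
      · have hodd1 : ¬ Even (n+1) := by simp [Nat.even_add_one, hev]
        rw [alternatingWord_succ', if_pos hev, cs.wordProd_cons, map_mul, Module.End.mul_apply,
          ihn, if_pos hev, if_neg hodd1, reflect_combo hgeom, hBij, hBjj]
        push_cast
        rw [hkey]
        match_scalars <;> ring
      · have hev1 : Even (n+1) := Nat.even_add_one.mpr (Nat.not_even_iff_odd.mpr hodd)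
        rw [alternatingWord_succ', if_neg (Nat.not_even_iff_odd.mpr hodd), cs.wordProd_cons,
          map_mul, Module.End.mul_apply, ihn, if_neg (Nat.not_even_iff_odd.mpr hodd),
          if_pos hev1, reflect_combo hgeom, hBii, hBji]
        push_cast
        rw [hkey]
        match_scalars <;> ring

lemma dihedral_formula_inf (i j : I) (hij : i ≠ j) (hm : M i j = 0) (n : ℕ) :
    ρ (cs.wordProd (alternatingWord i j n)) (sroot i) =
      if Even n then ((n:ℝ)+1) • sroot i + (n:ℝ) • sroot j
      else (n:ℝ) • sroot i + ((n:ℝ)+1) • sroot j := by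
  have hBij : B (sroot i) (sroot j) = -1 := hgeom.form_apply_of_eq_zero i j hm
  have hBji : B (sroot j) (sroot i) = -1 :=
    hgeom.form_apply_of_eq_zero j i (by rwa [M.symmetric j i])
  have hBii : B (sroot i) (sroot i) = 1 := form_self hgeom i
  have hBjj : B (sroot j) (sroot j) = 1 := form_self hgeom j
  induction n with
  | zero =>
      simp only [Nat.cast_zero, Even.zero, if_true]
      show ρ (cs.wordProd []) (sroot i) = _
      rw [cs.wordProd_nil, map_one]
      simp
  | succ n ihn =>
      rcases Nat.even_or_odd n with hev | hodd
      · have hodd1 : ¬ Even (n+1) := by simp [Nat.even_add_one, hev]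
        rw [alternatingWord_succ', if_pos hev, cs.wordProd_cons, map_mul, Module.End.mul_apply,
          ihn, if_pos hev, if_neg hodd1, reflect_combo hgeom, hBij, hBjj]
        push_cast
        match_scalars <;> ring
      · have hev1 : Even (n+1) := Nat.even_add_one.mpr (Nat.not_even_iff_odd.mpr hodd)
        rw [alternatingWord_succ', if_neg (Nat.not_even_iff_odd.mpr hodd), cs.wordProd_cons,
          map_mul, Module.End.mul_apply, ihn, if_neg (Nat.not_even_iff_odd.mpr hodd),
          if_pos hev1, reflect_combo hgeom, hBii, hBji]
        push_cast
        match_scalars <;> ring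

lemma dihedral_pos (i j : I) (hij : i ≠ j) (n : ℕ) (hn : M i j = 0 ∨ n < M i j) :
    ∃ a b : ℝ, 0 ≤ a ∧ 0 ≤ b ∧
      ρ (cs.wordProd (alternatingWord i j n)) (sroot i) = a • sroot i + b • sroot j := by
  rcases hn with hm | hn
  · rw [dihedral_formula_inf hgeom i j hij hm]
    rcases Nat.even_or_odd n with hev | hodd
    · exact ⟨(n:ℝ)+1, (n:ℝ), by positivity, by positivity, by rw [if_pos hev]⟩
    · exact ⟨(n:ℝ), (n:ℝ)+1, by positivity, by positivity,
        by rw [if_neg (Nat.not_even_iff_odd.mpr hodd)]⟩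
  · have hm : M i j ≠ 0 := by omega
    have hm2 : 2 ≤ M i j := by have := M.off_diagonal i j hij; omega
    set θ : ℝ := Real.pi / (M i j : ℝ) with hθ
    have hmpos : (0:ℝ) < (M i j : ℝ) := by exact_mod_cast Nat.pos_of_ne_zero hm
    have hθpos : 0 < θ := div_pos Real.pi_pos hmpos
    have hθlt : θ < Real.pi := by
      rw [hθ, div_lt_iff₀ hmpos]
      nth_rw 1 [← mul_one Real.pi]
      apply mul_lt_mul_of_pos_left _ Real.pi_pos
      exact_mod_cast hm2
    have hsθ : 0 < Real.sin θ := Real.sin_pos_of_pos_of_lt_pi hθpos hθlt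
    have hsin : ∀ k : ℕ, k ≤ M i j → 0 ≤ Real.sin ((k:ℝ) * θ) := by
      intro k hk
      apply Real.sin_nonneg_of_nonneg_of_le_pi
      · positivity
      · have hkm : (k:ℝ) ≤ (M i j : ℝ) := by exact_mod_cast hk
        calc (k:ℝ) * θ ≤ (M i j : ℝ) * θ := by
              apply mul_le_mul_of_nonneg_right hkm (le_of_lt hθpos)
          _ = Real.pi := by
              rw [hθ]
              field_simp
    have h1 : 0 ≤ Real.sin ((n:ℝ) * θ) / Real.sin θ :=
      div_nonneg (hsin n (le_of_lt hn)) (le_of_lt hsθ)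
    have h2 : 0 ≤ Real.sin (((n:ℝ)+1) * θ) / Real.sin θ := by
      apply div_nonneg _ (le_of_lt hsθ)
      have := hsin (n+1) (by omega)
      push_cast at this
      exact this
    rw [dihedral_formula_fin hgeom i j hij hm]
    rcases Nat.even_or_odd n with hev | hodd
    · exact ⟨_, _, h2, h1, by rw [if_pos hev]⟩
    · exact ⟨_, _, h1, h2, by rw [if_neg (Nat.not_even_iff_odd.mpr hodd)]⟩

end Tits

-- ### dihedral word reduction and Tits' theorem

lemma prepend_alt (cs : CoxeterSystem M W) (i j : I) (hij : i ≠ j) (x : I) (hx : x = i ∨ x = j)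
    (n : ℕ) (hn : M i j = 0 ∨ n ≤ M i j) :
    ∃ n', n' ≤ n + 1 ∧ (M i j = 0 ∨ n' ≤ M i j) ∧
      (cs.simple x * cs.wordProd (CoxeterSystem.alternatingWord i j n)
          = cs.wordProd (CoxeterSystem.alternatingWord i j n') ∨
       cs.simple x * cs.wordProd (CoxeterSystem.alternatingWord i j n)
          = cs.wordProd (CoxeterSystem.alternatingWord j i n')) := by
  open CoxeterSystem in
  by_cases hx_ext : x = (if Even n then j else i)
  · by_cases hcap : M i j = 0 ∨ n + 1 ≤ M i j
    · refine ⟨n+1, le_refl _, hcap, Or.inl ?_⟩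
      rw [alternatingWord_succ', cs.wordProd_cons, hx_ext]
    · push_neg at hcap
      obtain ⟨hm, hlt⟩ := hcap
      have hnle : n ≤ M i j := by tauto
      have hnM : n = M i j := by omega
      have hm2 : 2 ≤ M i j := by have := M.off_diagonal i j hij; omega
      obtain ⟨k, hk⟩ : ∃ k, n = k + 1 := ⟨n - 1, by omega⟩
      have hbraid : cs.wordProd (alternatingWord i j n) = cs.wordProd (alternatingWord j i n) := by
        have h := cs.prod_alternatingWord_eq_prod_alternatingWord_sub i j n (by omega)
        rw [show M i j * 2 - n = n by omega] at h
        exact h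
      have hstep : alternatingWord j i n = (if Even k then i else j) :: alternatingWord j i k := by
        rw [hk, alternatingWord_succ']
      have hx_can : x = (if Even k then i else j) := by
        rcases Nat.even_or_odd n with he | ho
        · rw [if_pos he] at hx_ext
          have : ¬ Even k := by simp [Nat.even_iff] at he ⊢; omega
          rw [if_neg this]; exact hx_ext
        · rw [if_neg (Nat.not_even_iff_odd.mpr ho)] at hx_ext
          have : Even k := by simp [Nat.even_iff, Nat.odd_iff] at ho ⊢; omega
          rw [if_pos this]; exact hx_ext
      refine ⟨k, by omega, Or.inr (by omega), Or.inr ?_⟩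
      rw [hbraid, hstep, cs.wordProd_cons, ← hx_can, cs.simple_mul_simple_cancel_left]
  · rcases Nat.eq_zero_or_pos n with rfl | hpos
    · rcases hx with rfl | rfl
      · refine ⟨1, by omega, ?_, Or.inr ?_⟩
        · rcases eq_or_ne (M x j) 0 with h | h
          · exact Or.inl h
          · exact Or.inr (Nat.pos_of_ne_zero h)
        · show cs.simple x * cs.wordProd [] = cs.wordProd (alternatingWord j x 1)
          rw [cs.wordProd_nil, mul_one]
          show _ = cs.wordProd ((alternatingWord x j 0).concat x)
          rw [cs.wordProd_concat]
          show _ = cs.wordProd [] * _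
          rw [cs.wordProd_nil, one_mul]
      · refine ⟨1, by omega, ?_, Or.inl ?_⟩
        · rcases eq_or_ne (M i x) 0 with h | h
          · exact Or.inl h
          · exact Or.inr (Nat.pos_of_ne_zero h)
        · show cs.simple x * cs.wordProd [] = cs.wordProd (alternatingWord i x 1)
          rw [cs.wordProd_nil, mul_one]
          show _ = cs.wordProd ((alternatingWord x i 0).concat x)
          rw [cs.wordProd_concat]
          show _ = cs.wordProd [] * _
          rw [cs.wordProd_nil, one_mul]
    · obtain ⟨k, rfl⟩ : ∃ k, n = k + 1 := ⟨n - 1, by omega⟩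
      have hstep : alternatingWord i j (k+1) = (if Even k then j else i) :: alternatingWord i j k :=
        alternatingWord_succ' i j k
      have hx_can : x = (if Even k then j else i) := by
        rcases Nat.even_or_odd (k+1) with he | ho
        · rw [if_pos he] at hx_ext
          have hk : Even k ↔ False := by simp [Nat.even_iff] at he ⊢; omega
          rcases hx with rfl | rfl
          · rw [if_neg (by simp [hk])]
          · exact absurd rfl hx_ext
        · rw [if_neg (Nat.not_even_iff_odd.mpr ho)] at hx_ext
          have hk : Even k := by simp [Nat.even_iff, Nat.odd_iff] at ho ⊢; omega
          rcases hx with rfl | rfl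
          · exact absurd rfl hx_ext
          · rw [if_pos hk]
      refine ⟨k, by omega, ?_, Or.inl ?_⟩
      · rcases hn with h | h
        · exact Or.inl h
        · exact Or.inr (by omega)
      · rw [hstep, cs.wordProd_cons, ← hx_can, cs.simple_mul_simple_cancel_left]

lemma dihedral_word_reduce (cs : CoxeterSystem M W) (i j : I) (hij : i ≠ j) (ω : List I)
    (hω : ∀ x ∈ ω, x = i ∨ x = j) :
    ∃ n, n ≤ ω.length ∧ (M i j = 0 ∨ n ≤ M i j) ∧
      (cs.wordProd ω = cs.wordProd (CoxeterSystem.alternatingWord i j n) ∨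
       cs.wordProd ω = cs.wordProd (CoxeterSystem.alternatingWord j i n)) := by
  induction ω with
  | nil =>
      refine ⟨0, by simp, Or.inr (Nat.zero_le _), Or.inl rfl⟩
  | cons x ω ih =>
      obtain ⟨n, hlen, hcond, hform | hform⟩ := ih (fun y hy => hω y (List.mem_cons_of_mem x hy))
      · obtain ⟨n', h1, h2, h3⟩ := prepend_alt cs i j hij x (hω x (List.mem_cons_self)) n hcond
        refine ⟨n', ?_, h2, ?_⟩
        · simp only [List.length_cons]; omega
        · rw [cs.wordProd_cons, hform]; exact h3
      · have hx' : x = j ∨ x = i := (hω x (List.mem_cons_self)).symm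
        have hcond' : M j i = 0 ∨ n ≤ M j i := by rwa [M.symmetric j i]
        obtain ⟨n', h1, h2, h3⟩ := prepend_alt cs j i hij.symm x hx' n hcond'
        refine ⟨n', ?_, ?_, ?_⟩
        · simp only [List.length_cons]; omega
        · rwa [M.symmetric j i] at h2
        · rw [cs.wordProd_cons, hform]
          exact h3.symm

section TitsMain

open CoxeterSystem

variable {cs : CoxeterSystem M W} {B : LinearMap.BilinForm ℝ (I → ℝ)}
variable {ρ}
variable (hgeom : IsGeometric cs ρ B)
include hgeom

theorem tits_nonneg (w : W) (i : I) (hi : ¬ cs.IsRightDescent w i) : 0 ≤ ρ w (sroot i) := by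
  suffices H : ∀ n (w : W) (i : I), cs.length w = n → ¬ cs.IsRightDescent w i →
      0 ≤ ρ w (sroot i) from H _ w i rfl hi
  clear hi w i
  intro n
  induction n using Nat.strong_induction_on with
  | _ n ih =>
    intro w i hlen hi
    rcases eq_or_ne w 1 with rfl | hw1
    · rw [map_one, Module.End.one_apply]
      exact sroot_nonneg i
    obtain ⟨j, hj⟩ := cs.exists_rightDescent_of_ne_one hw1
    have hij : i ≠ j := fun h => hi (h ▸ hj)
    have hPex : ∃ d : ℕ, ∃ v : W, ∃ ω : List I, (∀ x ∈ ω, x = i ∨ x = j) ∧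
        v * cs.wordProd ω = w ∧ cs.length v + ω.length = cs.length w ∧ cs.length v = d :=
      ⟨cs.length w, w, [], by simp, by rw [cs.wordProd_nil, mul_one], by simp, rfl⟩
    obtain ⟨v, ω, hω, hvw, hadd, hd⟩ := Nat.find_spec hPex
    have hnd : ∀ k, (k = i ∨ k = j) → ¬ cs.IsRightDescent v k := by
      intro k hk hdesc
      have hlv : cs.length (v * cs.simple k) + 1 = cs.length v := (cs.isRightDescent_iff).mp hdesc
      refine Nat.find_min hPex (m := cs.length (v * cs.simple k)) (by omega) ?_
      refine ⟨v * cs.simple k, k :: ω, ?_, ?_, ?_, rfl⟩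
      · intro x hx
        rcases List.mem_cons.mp hx with rfl | hx
        · exact hk
        · exact hω x hx
      · calc (v * cs.simple k) * (cs.wordProd (k :: ω)) 
            = (v * cs.simple k) * (cs.simple k * cs.wordProd ω) := by rw [cs.wordProd_cons]
          _ = v * cs.wordProd ω := by rw [mul_assoc, cs.simple_mul_simple_cancel_left]
          _ = w := hvw
      · simp only [List.length_cons]; omega
    have hvlt : cs.length v < cs.length w := by
      rcases Nat.lt_or_ge (cs.length v) (cs.length w) with h | h
      · exact h
      · exfalso
        have hω0 : ω = [] := List.length_eq_zero_iff.mp (by omega)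
        rw [hω0, cs.wordProd_nil, mul_one] at hvw
        subst hvw
        exact hnd j (Or.inr rfl) hj
    have hvi : 0 ≤ ρ v (sroot i) := ih (cs.length v) (by omega) v i rfl (hnd i (Or.inl rfl))
    have hvj : 0 ≤ ρ v (sroot j) := ih (cs.length v) (by omega) v j rfl (hnd j (Or.inr rfl))
    obtain ⟨m, hmlen, hmcond, hform⟩ := dihedral_word_reduce cs i j hij ω hω
    have hends : ∀ m', 1 ≤ m' → m' ≤ ω.length →
        cs.wordProd ω = cs.wordProd (alternatingWord j i m') → False := by
      intro m' h1 h2 hform'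
      obtain ⟨k, rfl⟩ : ∃ k, m' = k + 1 := ⟨m' - 1, by omega⟩
      apply hi
      have hws : w * cs.simple i = v * cs.wordProd (alternatingWord i j k) := by
        rw [← hvw, hform']
        show v * cs.wordProd ((alternatingWord i j k).concat i) * cs.simple i = _
        rw [cs.wordProd_concat, mul_assoc, mul_assoc, cs.simple_mul_simple_self, mul_one]
      show cs.length (w * cs.simple i) < cs.length w
      rw [hws]
      calc cs.length (v * cs.wordProd (alternatingWord i j k))
          ≤ cs.length v + cs.length (cs.wordProd (alternatingWord i j k)) := cs.length_mul_le _ _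
        _ ≤ cs.length v + k := by
            have h3 := cs.length_wordProd_le (alternatingWord i j k)
            rw [length_alternatingWord] at h3
            omega
        _ < cs.length v + ω.length := by omega
        _ = cs.length w := hadd
    have hfinal : ∃ a b : ℝ, 0 ≤ a ∧ 0 ≤ b ∧
        ρ (cs.wordProd ω) (sroot i) = a • sroot i + b • sroot j := by
      rcases hform with hform | hform
      · rcases eq_or_ne (M i j) 0 with hM | hM
        · obtain ⟨a, b, ha, hb, heq⟩ := dihedral_pos hgeom i j hij m (Or.inl hM)
          exact ⟨a, b, ha, hb, by rw [hform, heq]⟩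
        · have hmle : m ≤ M i j := by tauto
          rcases lt_or_eq_of_le hmle with hlt | heq
          · obtain ⟨a, b, ha, hb, heq2⟩ := dihedral_pos hgeom i j hij m (Or.inr hlt)
            exact ⟨a, b, ha, hb, by rw [hform, heq2]⟩
          · exfalso
            have hm2 : 2 ≤ M i j := by have := M.off_diagonal i j hij; omega
            apply hends m (by omega) hmlen
            rw [hform]
            have hbr := cs.prod_alternatingWord_eq_prod_alternatingWord_sub i j m (by omega)
            rw [show M i j * 2 - m = m by omega] at hbr
            exact hbr
      · rcases Nat.eq_zero_or_pos m with rfl | hpos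
        · have h0 : cs.wordProd ω = cs.wordProd (alternatingWord i j 0) := hform
          have hc : M i j = 0 ∨ 0 < M i j := by omega
          obtain ⟨a, b, ha, hb, heq⟩ := dihedral_pos hgeom i j hij 0 hc
          exact ⟨a, b, ha, hb, by rw [h0, heq]⟩
        · exact (hends m hpos hmlen hform).elim
    obtain ⟨a, b, ha, hb, heq⟩ := hfinal
    rw [← hvw, map_mul, Module.End.mul_apply, heq, map_add, map_smul, map_smul]
    exact add_nonneg (smul_nonneg ha hvi) (smul_nonneg hb hvj)

theorem tits_nonpos (w : W) (i : I) (hi : cs.IsRightDescent w i) : ρ w (sroot i) ≤ 0 := by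
  have h1 : ¬ cs.IsRightDescent (w * cs.simple i) i := by
    intro h
    have h2 := (cs.isRightDescent_iff).mp h
    rw [cs.simple_mul_simple_cancel_right] at h2
    have h3 := (cs.isRightDescent_iff).mp hi
    omega
  have h2 := tits_nonneg hgeom (w * cs.simple i) i h1
  have h3 : ρ (w * cs.simple i) (sroot i) = - ρ w (sroot i) := by
    rw [map_mul, Module.End.mul_apply, simple_apply_self hgeom, map_neg]
  rw [h3] at h2
  exact neg_nonneg.mp h2


lemma root_dichotomy {β : I → ℝ} (hβ : β ∈ Phi ρ) : 0 ≤ β ∨ β ≤ 0 := by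
  obtain ⟨w, i, rfl⟩ := hβ
  by_cases h : cs.IsRightDescent w i
  · exact Or.inr (tits_nonpos hgeom w i h)
  · exact Or.inl (tits_nonneg hgeom w i h)

lemma simple_perm_pos {β : I → ℝ} (a : I) (hβ : β ∈ Phi ρ) (hpos : 0 ≤ β) (hne : β ≠ sroot a) :
    0 ≤ ρ (cs.simple a) β := by
  have hmem : ρ (cs.simple a) β ∈ Phi ρ := root_smul_mem hgeom hβ _
  rcases root_dichotomy hgeom hmem with h | h
  · exact h
  · exfalso
    have hco : ∀ k, k ≠ a → β k = 0 := by
      intro k hk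
      have h1 : ρ (cs.simple a) β k ≤ 0 := h k
      rw [simple_apply' hgeom] at h1
      have h2 : sroot a k = 0 := by simp [sroot, Pi.single_apply, hk]
      simp only [Pi.sub_apply, Pi.smul_apply, h2, smul_eq_mul, mul_zero, sub_zero] at h1
      exact le_antisymm h1 (hpos k)
    have hβa : β = β a • sroot a := by
      funext k
      rcases eq_or_ne k a with rfl | hk
      · simp [sroot, Pi.single_apply]
      · simp [sroot, Pi.single_apply, hk, hco k hk]
    have hnorm := root_norm hgeom hβ
    rw [hβa] at hnorm
    simp only [map_smul, LinearMap.smul_apply, smul_eq_mul] at hnorm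
    rw [form_self hgeom] at hnorm
    have hβa1 : β a = 1 ∨ β a = -1 := by
      have : β a * β a = 1 := by linarith [hnorm]
      rcases mul_self_eq_one_iff.mp this with h' | h'
      · exact Or.inl h'
      · exact Or.inr h'
    rcases hβa1 with h' | h'
    · apply hne
      rw [hβa, h', one_smul]
    · have := hpos a
      rw [h'] at hβa
      have h2 : β a = -1 := h'
      have h3 := hpos a
      rw [h2] at h3
      norm_num at h3

end TitsMain

section MainAux

open CoxeterSystem

variable {cs : CoxeterSystem M W} {B : LinearMap.BilinForm ℝ (I → ℝ)}
variable {ρ}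
variable (hgeom : IsGeometric cs ρ B) (L : Set W)

lemma rho_simple_sq (a : I) (v : I → ℝ) : ρ (cs.simple a) (ρ (cs.simple a) v) = v := by
  rw [← Module.End.mul_apply, ← map_mul, cs.simple_mul_simple_self, map_one, Module.End.one_apply]

lemma toggle_eq_of_mem {i : I} {u : W} (h : ρ u⁻¹ (sroot i) ∈ RL ρ L) :
    toggle ρ cs L i u = u := by
  rw [toggle, if_pos h]

lemma toggle_eq_of_not_mem {i : I} {u : W} (h : ρ u⁻¹ (sroot i) ∉ RL ρ L) :
    toggle ρ cs L i u = cs.simple i * u := by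
  rw [toggle, if_neg h]

include hgeom

lemma w0_nonpos {w₀ : W} (hw₀ : ∀ w : W, cs.length w ≤ cs.length w₀) (δ : I → ℝ) (hδ : 0 ≤ δ) :
    ρ w₀ δ ≤ 0 := by
  have hdesc : ∀ i : I, cs.IsRightDescent w₀ i := fun i =>
    lt_of_le_of_ne (hw₀ (w₀ * cs.simple i)) (cs.length_mul_simple_ne w₀ i)
  have hterm : ∀ i ∈ Finset.univ (α := I), ρ w₀ (δ i • sroot i) ≤ 0 := by
    intro i _
    rw [map_smul]
    exact smul_nonpos_of_nonneg_of_nonpos (hδ i) (tits_nonpos hgeom w₀ i (hdesc i))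
  have hsum : ρ w₀ δ = ∑ i : I, ρ w₀ (δ i • sroot i) := by
    conv_lhs => rw [decomp δ]
    rw [map_sum]
  rw [hsum]
  exact Finset.sum_nonpos hterm

lemma toggle_mem_L (hconv : IsConvex ρ L) {v : W} (hv : v ∈ L) (a : I) :
    toggle ρ cs L a v ∈ L := by
  by_cases hcond : ρ v⁻¹ (sroot a) ∈ RL ρ L
  · rwa [toggle_eq_of_mem L hcond]
  · rw [toggle_eq_of_not_mem L hcond]
    apply hconv
    intro β hβ
    show 0 ≤ ρ (cs.simple a * v) β
    rw [map_mul, Module.End.mul_apply]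
    have hδ0 : 0 ≤ ρ v β := hβ.2 v hv
    have hδPhi : ρ v β ∈ Phi ρ := root_smul_mem hgeom hβ.1 v
    have hδa : ρ v β ≠ sroot a := by
      intro h
      apply hcond
      have h2 : β = ρ v⁻¹ (sroot a) := by rw [← h, rho_inv_apply]
      rwa [← h2]
    exact simple_perm_pos hgeom a hδPhi hδ0 hδa

lemma toggle_surj_L (hconv : IsConvex ρ L) {v : W} (hv : v ∈ L) (a : I) :
    ∃ u ∈ L, toggle ρ cs L a u = v := by
  by_cases hcond : ρ v⁻¹ (sroot a) ∈ RL ρ L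
  · exact ⟨v, hv, toggle_eq_of_mem L hcond⟩
  · refine ⟨cs.simple a * v, ?_, ?_⟩
    · have h1 := toggle_mem_L hgeom L hconv hv a
      rwa [toggle_eq_of_not_mem L hcond] at h1
    · have hη : ρ (cs.simple a * v)⁻¹ (sroot a) ∉ RL ρ L := by
        intro hmem
        have h1 : 0 ≤ ρ v (ρ (cs.simple a * v)⁻¹ (sroot a)) := hmem.2 v hv
        have h2 : ρ (cs.simple a * v)⁻¹ (sroot a) = - ρ v⁻¹ (sroot a) := by
          rw [mul_inv_rev, cs.inv_simple, map_mul, Module.End.mul_apply, simple_apply_self hgeom,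
            map_neg]
        rw [h2, map_neg, rho_apply_inv] at h1
        have h3 := h1 a
        simp [sroot, Pi.single_apply] at h3
        linarith
      rw [toggle_eq_of_not_mem L hη, ← mul_assoc, cs.simple_mul_simple_self, one_mul]

lemma toggleWord_surj_L (hconv : IsConvex ρ L) (l : List I) {v : W} (hv : v ∈ L) :
    ∃ u ∈ L, toggleWord ρ cs L l u = v := by
  induction l generalizing v with
  | nil => exact ⟨v, hv, rfl⟩
  | cons a t ih =>
      obtain ⟨u₁, hu₁, he₁⟩ := toggle_surj_L hgeom L hconv hv a
      obtain ⟨u, hu, he⟩ := ih hu₁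
      refine ⟨u, hu, ?_⟩
      show toggle ρ cs L a (toggleWord ρ cs L t u) = v
      rw [he, he₁]

lemma key_invariant (hL : L.Nonempty) {w₀ : W} (hw₀ : ∀ w : W, cs.length w ≤ cs.length w₀)
    {l : List I} (hred : cs.IsReduced l) (hprod : cs.wordProd l = w₀) (u : W) :
    ∀ (t p : List I), l = p ++ t → ∀ β ∈ RL ρ L,
      ρ (toggleWord ρ cs L t u) β ≤ 0 →
      0 ≤ ρ (cs.wordProd p) (ρ (toggleWord ρ cs L t u) β) := by
  intro t
  induction t with
  | nil =>
      intro p hp β hβ hneg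
      have hpl : p = l := by simpa using hp.symm
      have ht0 : toggleWord ρ cs L [] u = u := rfl
      rw [ht0] at hneg ⊢
      rw [hpl, hprod]
      have h1 : ρ w₀ (- ρ u β) ≤ 0 := w0_nonpos hgeom hw₀ _ (neg_nonneg.mpr hneg)
      rw [map_neg] at h1
      exact neg_nonpos.mp h1
  | cons a t ih =>
      intro p hp β hβ hneg
      have hp' : l = (p ++ [a]) ++ t := by rw [hp]; simp
      have hred_p : cs.IsReduced p := by
        have h1 := hred.take p.length
        rwa [hp, List.take_left] at h1
      have hred_pa : cs.IsReduced (p ++ [a]) := by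
        have h1 := hred.take (p ++ [a]).length
        rwa [hp', List.take_left] at h1
      have hπpa_eq : cs.wordProd (p ++ [a]) = cs.wordProd p * cs.simple a := by
        rw [cs.wordProd_append, cs.wordProd_singleton]
      have hna : ¬ cs.IsRightDescent (cs.wordProd p) a := by
        intro hdesc
        have h1 : cs.length (cs.wordProd p * cs.simple a) < cs.length (cs.wordProd p) := hdesc
        have h2 : cs.length (cs.wordProd p) = p.length := hred_p
        have h3 : cs.length (cs.wordProd (p ++ [a])) = (p ++ [a]).length := hred_pa
        rw [hπpa_eq] at h3
        simp at h3
        omega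
      have hpa0 : 0 ≤ ρ (cs.wordProd p) (sroot a) := tits_nonneg hgeom _ a hna
      set ut := toggleWord ρ cs L t u with hut
      have htw : toggleWord ρ cs L (a :: t) u = toggle ρ cs L a ut := rfl
      have hπpa : ∀ x : I → ℝ, ρ (cs.wordProd (p ++ [a])) x
          = ρ (cs.wordProd p) (ρ (cs.simple a) x) := by
        intro x
        rw [hπpa_eq, map_mul, Module.End.mul_apply]
      by_cases hcond : ρ ut⁻¹ (sroot a) ∈ RL ρ L
      · -- stay case
        rw [htw, toggle_eq_of_mem L hcond] at hneg ⊢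
        set δ : I → ℝ := - ρ ut β with hδdef
        have hutβδ : ρ ut β = - δ := by rw [hδdef, neg_neg]
        have hδ0 : 0 ≤ δ := neg_nonneg.mpr hneg
        have hβPhi : β ∈ Phi ρ := hβ.1
        have hδPhi : δ ∈ Phi ρ := root_neg_mem hgeom (root_smul_mem hgeom hβPhi ut)
        have hδa : δ ≠ sroot a := by
          intro h
          have hβval : β = - ρ ut⁻¹ (sroot a) := by
            have h2 : ρ ut β = - sroot a := by rw [hutβδ, h]
            rw [← rho_inv_apply (ρ := ρ) ut β, h2, map_neg]
          obtain ⟨z, hz⟩ := hL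
          have h1 : 0 ≤ ρ z β := hβ.2 z hz
          have h2 : 0 ≤ ρ z (ρ ut⁻¹ (sroot a)) := hcond.2 z hz
          have h3 : ρ z β = - ρ z (ρ ut⁻¹ (sroot a)) := by rw [hβval, map_neg]
          have h4 : ρ z β = 0 := le_antisymm (by rw [h3]; exact neg_nonpos_of_nonneg h2) h1
          exact root_ne_zero hgeom (root_smul_mem hgeom hβPhi z) h4
        have hε0 : 0 ≤ ρ (cs.simple a) δ := simple_perm_pos hgeom a hδPhi hδ0 hδa
        have hεform : ρ (cs.simple a) δ = δ - (2 * B δ (sroot a)) • sroot a :=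
          simple_apply' hgeom a δ
        set c : ℝ := 2 * B δ (sroot a) with hc
        have hgoal_iff : ρ (cs.wordProd p) (ρ ut β) = - ρ (cs.wordProd p) δ := by
          rw [hutβδ, map_neg]
        rcases le_or_gt c 0 with hcle | hcpos
        · have hIH := ih (p ++ [a]) hp' β hβ hneg
          rw [hπpa] at hIH
          have h5 : ρ (cs.simple a) (ρ ut β) = - ρ (cs.simple a) δ := by
            rw [hutβδ, map_neg]
          rw [h5, map_neg] at hIH
          have h6 : ρ (cs.wordProd p) (ρ (cs.simple a) δ) ≤ 0 := neg_nonneg.mp hIH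
          have h7 : ρ (cs.wordProd p) δ ≤ 0 := by
            have h8 : δ = ρ (cs.simple a) δ + c • sroot a := by
              rw [hεform]
              module
            rw [h8, map_add, map_smul]
            exact add_nonpos h6 (smul_nonpos_of_nonpos_of_nonneg hcle hpa0)
          rw [hgoal_iff]
          exact neg_nonneg.mpr h7
        · set ξ : I → ℝ := ρ ut⁻¹ (sroot a) with hξ
          set β' : I → ℝ := β + c • ξ with hβ'def
          have hβ'form : β' = - ρ ut⁻¹ (ρ (cs.simple a) δ) := by
            rw [hεform, map_sub, map_smul]
            have h9 : ρ ut⁻¹ δ = - β := by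
              rw [hδdef, map_neg, rho_inv_apply]
            rw [h9, hβ'def, hξ]
            module
          have hβ'Phi : β' ∈ Phi ρ := by
            rw [hβ'form]
            exact root_neg_mem hgeom (root_smul_mem hgeom (root_smul_mem hgeom hδPhi _) _)
          have hβ'RL : β' ∈ RL ρ L := by
            refine ⟨hβ'Phi, fun w hw => ?_⟩
            have h1 := hβ.2 w hw
            have h2 := hcond.2 w hw
            show 0 ≤ ρ w β'
            rw [hβ'def, map_add, map_smul]
            exact add_nonneg h1 (smul_nonneg (le_of_lt hcpos) h2)
          have hutβ' : ρ ut β' = - ρ (cs.simple a) δ := by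
            rw [hβ'def, map_add, map_smul, hξ, rho_apply_inv, hutβδ, hεform]
            module
          have hneg' : ρ ut β' ≤ 0 := by
            rw [hutβ']
            exact neg_nonpos_of_nonneg hε0
          have hIH := ih (p ++ [a]) hp' β' hβ'RL hneg'
          rw [hπpa, hutβ', map_neg, rho_simple_sq, map_neg] at hIH
          rw [hgoal_iff]
          exact hIH
      · -- flip case
        rw [htw, toggle_eq_of_not_mem L hcond] at hneg ⊢
        set δ : I → ℝ := - ρ (cs.simple a * ut) β with hδdef
        have hu'βδ : ρ (cs.simple a * ut) β = - δ := by rw [hδdef, neg_neg]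
        have hδ0 : 0 ≤ δ := neg_nonneg.mpr hneg
        have hβPhi : β ∈ Phi ρ := hβ.1
        have hδPhi : δ ∈ Phi ρ := root_neg_mem hgeom (root_smul_mem hgeom hβPhi _)
        have hsplit2 : ∀ x : I → ℝ, ρ (cs.simple a * ut) x = ρ (cs.simple a) (ρ ut x) := by
          intro x
          rw [map_mul, Module.End.mul_apply]
        have hδa : δ ≠ sroot a := by
          intro h
          apply hcond
          have h1 : ρ ut β = sroot a := by
            have h2 : ρ (cs.simple a) (ρ (cs.simple a * ut) β) = ρ ut β := by
              rw [hsplit2, rho_simple_sq]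
            rw [← h2, hu'βδ, h, map_neg, simple_apply_self hgeom, neg_neg]
          have h3 : β = ρ ut⁻¹ (sroot a) := by rw [← h1, rho_inv_apply]
          rwa [← h3]
        have hε0 : 0 ≤ ρ (cs.simple a) δ := simple_perm_pos hgeom a hδPhi hδ0 hδa
        have hutβ : ρ ut β = - ρ (cs.simple a) δ := by
          have h2 : ρ ut β = ρ (cs.simple a) (ρ (cs.simple a * ut) β) := by
            rw [hsplit2, rho_simple_sq]
          rw [h2, hu'βδ, map_neg]
        have hneg2 : ρ ut β ≤ 0 := by
          rw [hutβ]
          exact neg_nonpos_of_nonneg hε0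
        have hIH := ih (p ++ [a]) hp' β hβ hneg2
        rw [hπpa, hutβ, map_neg, rho_simple_sq, map_neg] at hIH
        rw [hu'βδ, map_neg]
        exact hIH

end MainAux

end BKBilliards

open BKBilliards

/-- If `W` is finite with long element `w∘` and `i_N ⋯ i_1` is a reduced
word for `w∘`, then `τ_{i_N} ⋯ τ_{i_1}(W) = 𝓛`. -/
theorem toggleWord_longElement_image
    {I : Type*} [Fintype I] [DecidableEq I] {M : CoxeterMatrix I} {W : Type*} [Group W]
    [Finite W]
    (cs : CoxeterSystem M W) (ρ : Representation ℝ W (I → ℝ))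
    (B : LinearMap.BilinForm ℝ (I → ℝ)) (hgeom : IsGeometric cs ρ B)
    (L : Set W) (hL : L.Nonempty) (hconv : IsConvex ρ L)
    (w₀ : W) (hw₀ : ∀ w : W, cs.length w ≤ cs.length w₀)
    (l : List I) (hred : cs.IsReduced l) (hprod : cs.wordProd l = w₀) :
    Set.range (toggleWord ρ cs L l) = L := by
  apply Set.eq_of_subset_of_subset
  · rintro v ⟨x, rfl⟩
    apply hconv
    intro β hβ
    show 0 ≤ ρ (toggleWord ρ cs L l x) β
    by_contra hneg'
    have hPhi' : ρ (toggleWord ρ cs L l x) β ∈ Phi ρ := root_smul_mem hgeom hβ.1 _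
    have hneg : ρ (toggleWord ρ cs L l x) β ≤ 0 :=
      (root_dichotomy hgeom hPhi').resolve_left hneg'
    have h2 := key_invariant hgeom L hL hw₀ hred hprod x l [] (by simp) β hβ hneg
    rw [cs.wordProd_nil, map_one, Module.End.one_apply] at h2
    exact hneg' h2
  · intro v hv
    obtain ⟨x, _, hxe⟩ := toggleWord_surj_L hgeom L hconv l hv
    exact ⟨x, hxe⟩
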